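/- arXiv:math/0103138 — 2 statements merged into one kernel-verified Lean document; each statement's English description precedes it below -/
import Mathlib

section
/- Let d ≥ 4 be an integer and let s ≥ 2 be the unique integer with binom(s+2,3) ≤ d < binom(s+3,3). Then among all finite sequences (c₀, c₁, ..., c_r) of positive integers with c₀ = 1, c₁ = 3, c_i ≤ binom(i+2,2) for all i ≥ 1, and Σ c_i = d, the minimum value of Σ_{i=2}^r (i-1)·c_i equals (s-1)·d - binom(s+2,3) - binom(s+2,4) + 1. -/
open Finset

private lemma hockey (n : ℕ) : ∑ i ∈ range n, (i+2).choose 2 = (n+2).choose 3 := by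
  induction n with
  | zero => simp
  | succ n ih =>
    rw [Finset.sum_range_succ, ih]
    have h : (n+1+2).choose 3 = (n+2).choose 2 + (n+2).choose 3 :=
      Nat.choose_succ_succ (n+2) 2
    omega

private lemma sumSF (s : ℕ) : ∑ i ∈ range s, (s - i) * (i+2).choose 2 = (s+3).choose 4 := by
  induction s with
  | zero => simp
  | succ s ih =>
    have h1 : ∀ i ∈ range (s+1), (s+1-i) * (i+2).choose 2
        = (s-i) * (i+2).choose 2 + (i+2).choose 2 := by
      intro i hi
      simp only [mem_range] at hi
      have h : s + 1 - i = (s - i) + 1 := by omega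
      rw [h, add_mul, one_mul]
    rw [Finset.sum_congr rfl h1, Finset.sum_add_distrib, Finset.sum_range_succ,
      Nat.sub_self, zero_mul, add_zero, ih, hockey]
    have h : (s+1+3).choose 4 = (s+3).choose 3 + (s+3).choose 4 :=
      Nat.choose_succ_succ (s+3) 3
    have h2 : (s+1+2).choose 3 = (s+3).choose 3 := by rw [show s+1+2 = s+3 by omega]
    omega

private lemma castSumSF (s : ℕ) :
    ∑ i ∈ range s, ((s - i : ℕ) : ℤ) * ((i+2).choose 2 : ℤ) = ((s+3).choose 4 : ℤ) := by
  rw [← sumSF s]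
  push_cast
  rfl

private lemma ident (s r : ℕ) (hr : 1 ≤ r) (c : ℕ → ℕ) :
    ∑ i ∈ Icc 2 r, ((i : ℤ) - 1) * (c i : ℤ)
      = ((s : ℤ) - 1) * (∑ i ∈ range (r+1), (c i : ℤ))
        - (∑ i ∈ range (r+1), ((s : ℤ) - i) * (c i : ℤ)) + (c 0 : ℤ) := by
  have h1 : ∑ i ∈ range (r+1), (((s:ℤ)-1) * (c i) - ((s:ℤ)-i) * (c i))
      = ((s : ℤ) - 1) * (∑ i ∈ range (r+1), (c i : ℤ))
        - (∑ i ∈ range (r+1), ((s : ℤ) - i) * (c i : ℤ)) := by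
    rw [Finset.sum_sub_distrib, Finset.mul_sum]
  rw [← h1]
  have h2 : ∀ i ∈ range (r+1), ((s:ℤ)-1) * (c i) - ((s:ℤ)-i) * (c i)
      = ((i:ℤ)-1) * (c i) := by
    intro i _; ring
  rw [Finset.sum_congr rfl h2]
  rw [Finset.range_eq_Ico, ← Finset.sum_Ico_consecutive _ (Nat.zero_le 2) (by omega : 2 ≤ r+1)]
  have h3 : ∑ i ∈ range 2, ((i:ℤ)-1) * (c i : ℤ) = -(c 0 : ℤ) := by
    rw [Finset.sum_range_succ, Finset.sum_range_one]
    push_cast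
    ring
  have h4 : Finset.Ico 2 (r+1) = Finset.Icc 2 r := by
    ext x; simp [Nat.lt_succ_iff]
  rw [← Finset.range_eq_Ico, h3, h4]
  ring

private lemma bound (s r : ℕ) (c : ℕ → ℕ) (hb : ∀ i, c i ≤ (i+2).choose 2) :
    ∑ i ∈ range (r+1), ((s:ℤ) - i) * (c i : ℤ) ≤ ((s+3).choose 4 : ℤ) := by
  set f : ℕ → ℤ := fun i => ((s - i : ℕ) : ℤ) * ((i+2).choose 2 : ℤ) with hf
  have step1 : ∑ i ∈ range (r+1), ((s:ℤ)-i) * (c i : ℤ) ≤ ∑ i ∈ range (r+1), f i := by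
    apply Finset.sum_le_sum
    intro i _
    rcases le_or_gt i s with h | h
    · have hcast : ((s:ℤ) - i) = ((s - i : ℕ) : ℤ) := by
        rw [Nat.cast_sub h]
      rw [hcast, hf]
      exact mul_le_mul_of_nonneg_left (by exact_mod_cast hb i) (by positivity)
    · have h1 : ((s:ℤ) - i) * (c i : ℤ) ≤ 0 :=
        mul_nonpos_of_nonpos_of_nonneg (by omega) (by positivity)
      have h2 : f i = 0 := by simp [hf, Nat.sub_eq_zero_of_le h.le]
      linarith
  have step2 : ∑ i ∈ range (r+1), f i ≤ ∑ i ∈ range (r+1+s), f i :=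
    Finset.sum_le_sum_of_subset_of_nonneg (Finset.range_subset_range.mpr (by omega))
      (fun i _ _ => by positivity)
  have step3 : ∑ i ∈ range (r+1+s), f i = ∑ i ∈ range s, f i := by
    refine (Finset.sum_subset (Finset.range_subset_range.mpr (by omega)) ?_).symm
    intro i _ hi
    simp only [mem_range, not_lt] at hi
    simp [hf, Nat.sub_eq_zero_of_le hi]
  have step4 : ∑ i ∈ range s, f i = ((s+3).choose 4 : ℤ) := castSumSF s
  linarith

/-- Proposition 3.1: for `d ≥ 4` and `s ≥ 2` with `binom(s+2,3) ≤ d < binom(s+3,3)`,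
the minimum of `Σ_{i=2}^r (i-1)c_i` over all h-vectors `(c₀,…,c_r)` with `c₀ = 1`,
`c₁ = 3`, positive entries, `c_i ≤ binom(i+2,2)`, and `Σ c_i = d`, equals
`(s-1)d - binom(s+2,3) - binom(s+2,4) + 1`. -/
theorem stmt8 (d s : ℕ) (hd : 4 ≤ d) (hs : 2 ≤ s)
    (h1 : Nat.choose (s + 2) 3 ≤ d) (h2 : d < Nat.choose (s + 3) 3) :
    IsLeast
      { g : ℤ | ∃ (r : ℕ) (c : ℕ → ℕ),
          c 0 = 1 ∧ c 1 = 3 ∧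
          (∀ i ≤ r, 0 < c i) ∧
          (∀ i, 1 ≤ i → c i ≤ Nat.choose (i + 2) 2) ∧
          (∑ i ∈ Finset.range (r + 1), c i = d) ∧
          g = ∑ i ∈ Finset.Icc 2 r, ((i : ℤ) - 1) * (c i : ℤ) }
      (((s : ℤ) - 1) * d - Nat.choose (s + 2) 3 - Nat.choose (s + 2) 4 + 1) := by
  have pascal4 : (s+3).choose 4 = (s+2).choose 3 + (s+2).choose 4 :=
    Nat.choose_succ_succ (s+2) 3
  have pascal3 : (s+3).choose 3 = (s+2).choose 2 + (s+2).choose 3 :=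
    Nat.choose_succ_succ (s+2) 2
  constructor
  · -- membership
    by_cases he : d = (s+2).choose 3
    · -- take r = s - 1, c i = binom(i+2,2)
      refine ⟨s - 1, fun i => (i+2).choose 2, by norm_num, by norm_num, ?_, ?_, ?_, ?_⟩
      · intro i _; exact Nat.choose_pos (by omega)
      · intro i _; exact le_refl _
      · have hss : s - 1 + 1 = s := by omega
        rw [hss, hockey]; omega
      · rw [ident s (s-1) (by omega)]
        have hss : s - 1 + 1 = s := by omega
        rw [hss]
        have hsum : ∑ i ∈ range s, (((i+2).choose 2 : ℕ) : ℤ) = (d : ℤ) := by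
          have h := hockey s
          rw [he]
          exact_mod_cast congrArg (Nat.cast : ℕ → ℤ) h
        have hS : ∑ i ∈ range s, ((s:ℤ) - i) * (((i+2).choose 2 : ℕ) : ℤ)
            = ((s+3).choose 4 : ℤ) := by
          rw [← castSumSF s]
          apply Finset.sum_congr rfl
          intro i hi
          simp only [mem_range] at hi
          rw [Nat.cast_sub hi.le]
        rw [hsum, hS]
        have : ((s+3).choose 4 : ℤ) = ((s+2).choose 3 : ℤ) + ((s+2).choose 4 : ℤ) := by
          exact_mod_cast pascal4
        norm_num
        linarith
    · -- take r = s, c i = if i = s then d - binom(s+2,3) else binom(i+2,2)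
      set e := d - (s+2).choose 3 with hedef
      have hepos : 0 < e := by omega
      have hele : e ≤ (s+2).choose 2 := by omega
      refine ⟨s, fun i => if i = s then e else (i+2).choose 2, ?_, ?_, ?_, ?_, ?_, ?_⟩
      · simp [show (0:ℕ) ≠ s by omega]
      · simp [show (1:ℕ) ≠ s by omega]
      · intro i _
        by_cases hi : i = s
        · simpa [hi] using hepos
        · simpa [hi] using Nat.choose_pos (show 2 ≤ i + 2 by omega)
      · intro i _
        by_cases hi : i = s
        · subst hi; simpa using hele
        · simp [hi]
      · rw [Finset.sum_range_succ]
        have : ∑ i ∈ range s, (if i = s then e else (i+2).choose 2)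
            = ∑ i ∈ range s, (i+2).choose 2 := by
          apply Finset.sum_congr rfl
          intro i hi
          simp only [mem_range] at hi
          simp [Nat.ne_of_lt hi]
        rw [this, hockey]
        simp
        omega
      · rw [ident s s (by omega)]
        have hsum : ∑ i ∈ range (s+1),
            ((if i = s then e else (i+2).choose 2 : ℕ) : ℤ) = (d : ℤ) := by
          rw [Finset.sum_range_succ]
          have : ∑ i ∈ range s, ((if i = s then e else (i+2).choose 2 : ℕ) : ℤ)
              = ∑ i ∈ range s, (((i+2).choose 2 : ℕ) : ℤ) := by
            apply Finset.sum_congr rfl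
            intro i hi
            simp only [mem_range] at hi
            simp [Nat.ne_of_lt hi]
          rw [this]
          have h := hockey s
          have : ∑ i ∈ range s, (((i+2).choose 2 : ℕ) : ℤ) = ((s+2).choose 3 : ℤ) := by
            exact_mod_cast congrArg (Nat.cast : ℕ → ℤ) h
          rw [this]
          simp only [if_pos rfl]
          push_cast
          omega
        have hS : ∑ i ∈ range (s+1),
            ((s:ℤ) - i) * ((if i = s then e else (i+2).choose 2 : ℕ) : ℤ)
            = ((s+3).choose 4 : ℤ) := by
          rw [Finset.sum_range_succ]
          simp only [if_pos rfl, sub_self, zero_mul, add_zero]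
          rw [← castSumSF s]
          apply Finset.sum_congr rfl
          intro i hi
          simp only [mem_range] at hi
          rw [Nat.cast_sub hi.le]
          simp [Nat.ne_of_lt hi]
        rw [hsum, hS]
        have : ((s+3).choose 4 : ℤ) = ((s+2).choose 3 : ℤ) + ((s+2).choose 4 : ℤ) := by
          exact_mod_cast pascal4
        simp [show (0:ℕ) ≠ s by omega]
        linarith
  · -- lower bound
    rintro g ⟨r, c, hc0, hc1, hpos, hbnd, hsum, rfl⟩
    have hr : 1 ≤ r := by
      by_contra h
      have : r = 0 := by omega
      subst this
      simp [Finset.sum_range_one, hc0] at hsum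
      omega
    have hb : ∀ i, c i ≤ (i+2).choose 2 := by
      intro i
      rcases Nat.eq_zero_or_pos i with h | h
      · subst h; simp [hc0]
      · exact hbnd i h
    rw [ident s r hr c, hc0]
    have hS := bound s r c hb
    have hdsum : ∑ i ∈ range (r+1), (c i : ℤ) = (d : ℤ) := by
      exact_mod_cast congrArg (Nat.cast : ℕ → ℤ) hsum
    rw [hdsum]
    have hp : ((s+3).choose 4 : ℤ) = ((s+2).choose 3 : ℤ) + ((s+2).choose 4 : ℤ) := by
      exact_mod_cast pascal4
    push_cast
    linarith
end

section
/- For integers d with 10 ≤ d < 20, the minimum of Σ_{i=2}^r (i-1)c_i over all h-vectors (1, 3, c₂, ..., c_r) of positive integers with c_i ≤ binom(i+2,2) and total sum d is 2d - 14, attained by the h-vector (1, 3, 6, d-10). -/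
/-- For `10 ≤ d < 20`, the minimal genus of an h-vector of degree `d` is `2d - 14`,
attained by the h-vector `(1, 3, 6, d-10)`. -/
theorem stmt10 (d : ℕ) (hd4 : 10 ≤ d) (hd10 : d < 20) :
    IsLeast
      { g : ℤ | ∃ (r : ℕ) (c : ℕ → ℕ),
          c 0 = 1 ∧ c 1 = 3 ∧
          (∀ i ≤ r, 0 < c i) ∧
          (∀ i, 1 ≤ i → c i ≤ Nat.choose (i + 2) 2) ∧
          (∑ i ∈ Finset.range (r + 1), c i = d) ∧
          g = ∑ i ∈ Finset.Icc 2 r, ((i : ℤ) - 1) * (c i : ℤ) }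
      (2 * (d : ℤ) - 14) ∧
    (∑ i ∈ Finset.Icc 2 3, ((i : ℤ) - 1) * (open Fin.CommRing in ![1, 3, 6, d - 10] i : ℤ) = 2 * (d : ℤ) - 14 ∨
      d = 10) := by
  constructor
  · constructor
    · -- membership
      by_cases h10 : d = 10
      · refine ⟨2, fun i => if i = 0 then 1 else if i = 1 then 3 else if i = 2 then 6 else 1,
          rfl, rfl, ?_, ?_, ?_, ?_⟩
        · intro i _
          dsimp only
          split
          · norm_num
          · split
            · norm_num
            · split <;> norm_num
        · intro i hi
          dsimp only
          split
          · omega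
          · split
            · rename_i h; subst h; decide
            · split
              · rename_i h; subst h; decide
              · rename_i h1 h2 h3
                calc 1 ≤ Nat.choose (3 + 2) 2 := by decide
                  _ ≤ Nat.choose (i + 2) 2 := Nat.choose_le_choose 2 (by omega)
        · subst h10; decide
        · subst h10; decide
      · refine ⟨3, fun i => if i = 0 then 1 else if i = 1 then 3 else if i = 2 then 6
            else if i = 3 then d - 10 else 1,
          rfl, rfl, ?_, ?_, ?_, ?_⟩
        · intro i hi
          dsimp only
          split
          · norm_num
          · split
            · norm_num
            · split
              · norm_num
              · split
                · omega
                · norm_num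
        · intro i hi
          dsimp only
          split
          · omega
          · split
            · rename_i h; subst h; decide
            · split
              · rename_i h; subst h; decide
              · split
                · rename_i h1 h2 h3 h4
                  subst h4
                  simp only [Nat.choose]
                  omega
                · rename_i h1 h2 h3 h4
                  calc 1 ≤ Nat.choose (3 + 2) 2 := by decide
                    _ ≤ Nat.choose (i + 2) 2 := Nat.choose_le_choose 2 (by omega)
        · simp [Finset.sum_range_succ]; omega
        · rw [show Finset.Icc 2 3 = {2, 3} from rfl]
          rw [Finset.sum_insert (by decide), Finset.sum_singleton]
          norm_num [Nat.cast_sub hd4]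
          ring
    · -- lower bound
      rintro g ⟨r, c, hc0, hc1, hpos, hbound, hsum, hg⟩
      have hr2 : 2 ≤ r := by
        by_contra h
        interval_cases r <;>
          simp [Finset.sum_range_succ, hc0, hc1] at hsum <;> omega
      have hsplit : Finset.range (r + 1) = insert 0 (insert 1 (Finset.Icc 2 r)) := by
        ext i
        simp only [Finset.mem_range, Finset.mem_insert, Finset.mem_Icc]
        omega
      rw [hsplit, Finset.sum_insert (by simp), Finset.sum_insert (by simp [Finset.mem_Icc]),
        hc0, hc1] at hsum
      have hsplit2 : Finset.Icc 2 r = insert 2 (Finset.Icc 3 r) := by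
        ext i; simp only [Finset.mem_insert, Finset.mem_Icc]; omega
      rw [hsplit2, Finset.sum_insert (by simp [Finset.mem_Icc])] at hsum hg
      have hc2 : c 2 ≤ 6 := by have := hbound 2 (by norm_num); exact le_trans this (by decide)
      have hT : (2 : ℤ) * ∑ i ∈ Finset.Icc 3 r, (c i : ℤ) ≤
          ∑ i ∈ Finset.Icc 3 r, ((i : ℤ) - 1) * (c i : ℤ) := by
        rw [Finset.mul_sum]
        apply Finset.sum_le_sum
        intro i hi
        simp only [Finset.mem_Icc] at hi
        have h3i : (3 : ℤ) ≤ i := by exact_mod_cast hi.1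
        nlinarith [Int.ofNat_nonneg (c i)]
      have hd' : ((1 + (3 + (c 2 + ∑ i ∈ Finset.Icc 3 r, c i)) : ℕ) : ℤ) = (d : ℤ) := by
        exact_mod_cast congrArg (Nat.cast : ℕ → ℤ) hsum
      push_cast at hd'
      have hgg : g = (c 2 : ℤ) + ∑ i ∈ Finset.Icc 3 r, ((i : ℤ) - 1) * (c i : ℤ) := by
        rw [hg]; push_cast; ring
      have hc2' : (c 2 : ℤ) ≤ 6 := by exact_mod_cast hc2
      linarith
  · left
    rw [show Finset.Icc (2:ℤ) 3 = {2, 3} by decide]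
    rw [Finset.sum_insert (by decide), Finset.sum_singleton]
    open Fin.CommRing in rw [show ((2:ℤ) : Fin 4) = 2 from rfl, show ((3:ℤ) : Fin 4) = 3 from rfl]
    simp [Nat.cast_sub hd4]
    ring
end
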